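/- arXiv:1512.05709 — 4 statements merged into one kernel-verified Lean document; each statement's English description precedes it below -/
import Mathlib

section
/- Let α₁,…,αᵣ be nonzero complex numbers. Then there exists L with 1 ≤ L ≤ r such that ∑ᵢ αᵢ^L ≠ 0. -/
/-!
If the power sums `p₁, …, p_r` of `α₁, …, α_r` all vanish, Newton's identities
`k e_k = ± ∑_{0 ≤ j < k} ± e_j p_{k-j}` show inductively (we are in characteristic zero, so `k` may
be cancelled) that `e₁, …, e_r` vanish too. But `e_r = α₁ ⋯ α_r ≠ 0`.
-/

open MvPolynomial Finset

variable {σ R : Type*} [Fintype σ] [CommRing R]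

theorem eval_psum (x : σ → R) (k : ℕ) : eval x (psum σ R k) = ∑ i, x i ^ k := by
  simp [psum]

theorem eval_esymm_card (x : σ → R) : eval x (esymm σ R (Fintype.card σ)) = ∏ i, x i := by
  simp [esymm, ← card_univ, powersetCard_self]

theorem eval_esymm_eq_zero_of_sum_pow_eq_zero [IsDomain R] [CharZero R] {x : σ → R} {n : ℕ}
    (hp : ∀ k, 1 ≤ k → k ≤ n → ∑ i, x i ^ k = 0) {k : ℕ} (hk : 1 ≤ k) (hkn : k ≤ n) :
    eval x (esymm σ R k) = 0 := by
  induction k using Nat.strong_induction_on with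
  | _ k ih =>
  have hterms : ∀ a ∈ {a ∈ antidiagonal k | a.1 < k},
      eval x ((-1) ^ a.1 * esymm σ R a.1 * psum σ R a.2) = 0 := by
    intro a ha
    obtain ⟨hsum, hlt⟩ := mem_filter.1 ha
    rw [HasAntidiagonal.mem_antidiagonal] at hsum
    rcases Nat.eq_zero_or_pos a.1 with h0 | hpos
    · rw [map_mul, eval_psum, hp a.2 (by omega) (by omega), mul_zero]
    · rw [map_mul, map_mul, ih a.1 hlt hpos (by omega), mul_zero, zero_mul]
  have newton := congrArg (eval x) (mul_esymm_eq_sum σ R k)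
  rw [map_mul, map_mul, map_sum, sum_eq_zero hterms, mul_zero, map_natCast] at newton
  exact (mul_eq_zero.1 newton).resolve_left (Nat.cast_ne_zero.2 (by omega))

theorem exists_sum_pow_ne_zero [IsDomain R] [CharZero R] [Nonempty σ] {x : σ → R}
    (hx : ∀ i, x i ≠ 0) : ∃ L, 1 ≤ L ∧ L ≤ Fintype.card σ ∧ ∑ i, x i ^ L ≠ 0 := by
  by_contra! hp
  have he := eval_esymm_eq_zero_of_sum_pow_eq_zero (R := R) hp Fintype.card_pos le_rfl
  rw [eval_esymm_card] at he
  exact prod_ne_zero_iff.2 (fun i _ ↦ hx i) he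

theorem exists_nonzero_power_sum (r : ℕ) (hr : 0 < r) (α : Fin r → ℂ)
    (hα : ∀ i, α i ≠ 0) :
    ∃ L : ℕ, 1 ≤ L ∧ L ≤ r ∧ ∑ i, α i ^ L ≠ 0 := by
  have : Nonempty (Fin r) := ⟨⟨0, hr⟩⟩
  simpa using exists_sum_pow_ne_zero hα
end

section
/- Let α₁,…,αᵣ ∈ ℂ∖{0} and suppose that for every L ∈ ℕ with 1 ≤ L ≤ r we have ∑ᵢ αᵢ^L = 0. Then r = 0, i.e., the list is empty. -/
/-!
Newton's identity `k e_k = ± ∑_{i + j = k, j ≥ 1} ± e_i p_j` shows that if the power sums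
`p_1, …, p_r` of `r` numbers vanish, then `r e_r = 0`. In characteristic zero this forces the
product `e_r = α₁ ⋯ α_r` to vanish, so one of the `αᵢ` is zero.
-/

namespace MvPolynomial

variable {σ R : Type*} [Fintype σ] [CommRing R]

theorem eval_esymm_card (x : σ → R) : eval x (esymm σ R (Fintype.card σ)) = ∏ i, x i := by
  simp [esymm, ← Finset.card_univ, Finset.powersetCard_self]

theorem natCast_mul_eval_esymm_eq_zero_of_sum_pow_eq_zero (x : σ → R) (k : ℕ)
    (h : ∀ j, 1 ≤ j → j ≤ k → ∑ i, x i ^ j = 0) : (k : R) * eval x (esymm σ R k) = 0 := by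
  have newton := congrArg (eval x) (mul_esymm_eq_sum σ R k)
  rw [map_mul, map_natCast] at newton
  rw [newton, map_mul, map_sum, Finset.sum_eq_zero, mul_zero]
  rintro ⟨i, j⟩ hij
  rw [Finset.mem_filter, Finset.HasAntidiagonal.mem_antidiagonal] at hij
  have hpsum : eval x (psum σ R j) = 0 := by
    simpa [psum] using h j (by omega) (by omega)
  simp [hpsum]

theorem prod_eq_zero_of_sum_pow_eq_zero [IsDomain R] [CharZero R] [Nonempty σ] (x : σ → R)
    (h : ∀ j, 1 ≤ j → j ≤ Fintype.card σ → ∑ i, x i ^ j = 0) : ∏ i, x i = 0 := by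
  rw [← eval_esymm_card]
  exact (mul_eq_zero.mp (natCast_mul_eval_esymm_eq_zero_of_sum_pow_eq_zero x _ h)).resolve_left
    (Nat.cast_ne_zero.mpr Fintype.card_ne_zero)

end MvPolynomial

theorem all_power_sums_zero_implies_empty (r : ℕ) (α : Fin r → ℂ)
    (hα : ∀ i, α i ≠ 0)
    (h : ∀ L : ℕ, 1 ≤ L → L ≤ r → ∑ i, α i ^ L = 0) :
    r = 0 := by
  by_contra hr
  have : Nonempty (Fin r) := Fin.pos_iff_nonempty.mp (Nat.pos_of_ne_zero hr)
  obtain ⟨i, -, hi⟩ := Finset.prod_eq_zero_iff.mp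
    (MvPolynomial.prod_eq_zero_of_sum_pow_eq_zero α (by simpa using h))
  exact hα i hi
end

section
/- If Y₁,…,Y_L are real d×d matrices simultaneously upper-triangularizable over ℝ, and P = (1/2)(I + F) is the projector onto the symmetric subspace of ℂ^d ⊗ ℂ^d, then tr(P(Y₁⊗Y₁)P(Y₂⊗Y₂)P ⋯ P(Y_L⊗Y_L)P) ≥ 0. -/
/-! The projector `P = (1 + F) / 2` is idempotent and commutes with every `Y ⊗ Y`, so all inner
copies of `P` collapse and the trace becomes `tr((M ⊗ M) P) = ((tr M)² + tr(M²)) / 2` for the real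
product `M = Y₁ ⋯ Y_L`. Conjugating by `Q` makes `M` upper triangular, so `tr(M²)` is the sum of the
squares of its diagonal entries. -/
open Matrix Kronecker ComplexOrder

theorem IsIdempotentElem.mul_prod_ofFn_mul {M : Type*} [Monoid M] {p : M}
    (hp : IsIdempotentElem p) {L : ℕ} (a : Fin L → M) (ha : ∀ i, Commute p (a i)) :
    p * (List.ofFn fun i => a i * p).prod = (List.ofFn a).prod * p := by
  induction L with
  | zero => simp
  | succ L ih =>
    simp only [List.ofFn_succ, List.prod_cons]
    rw [← mul_assoc, ← mul_assoc, (ha 0).eq, mul_assoc, mul_assoc, ← mul_assoc p p, hp.eq,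
      ih _ fun i => ha i.succ, mul_assoc]

namespace Matrix

variable {n R : Type*}

theorem BlockTriangular.trace_mul_self_nonneg [Fintype n] [Ring R] [LinearOrder R]
    [IsStrictOrderedRing R] [LinearOrder n] {T : Matrix n n R} (hT : T.BlockTriangular id) :
    0 ≤ trace (T * T) := by
  have hdiag : ∀ i, (T * T) i i = T i i * T i i := fun i => by
    rw [mul_apply, Finset.sum_eq_single i]
    · intro j _ hji
      rcases hji.lt_or_gt with hlt | hgt
      · rw [hT hlt, zero_mul]
      · rw [hT hgt, mul_zero]
    · simp
  simpa only [trace, diag, hdiag] using Finset.sum_nonneg fun i _ => mul_self_nonneg (T i i)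

variable [DecidableEq n]

section Swap

variable (n R) in
def swapMatrix [Zero R] [One R] : Matrix (n × n) (n × n) R :=
  fun p q => if p.1 = q.2 ∧ p.2 = q.1 then 1 else 0

theorem swapMatrix_eq_toMatrix_prodComm [Zero R] [One R] :
    swapMatrix n R = (Equiv.prodComm n n).toPEquiv.toMatrix := by
  ext p q
  simp [swapMatrix, PEquiv.toMatrix_apply, Prod.ext_iff, eq_comm, and_comm]

variable [Fintype n] [CommSemiring R]

theorem swapMatrix_mul (M : Matrix (n × n) (n × n) R) :
    swapMatrix n R * M = M.submatrix Prod.swap id := by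
  rw [swapMatrix_eq_toMatrix_prodComm, PEquiv.toMatrix_toPEquiv_mul]; rfl

theorem mul_swapMatrix (M : Matrix (n × n) (n × n) R) :
    M * swapMatrix n R = M.submatrix id Prod.swap := by
  rw [swapMatrix_eq_toMatrix_prodComm, PEquiv.mul_toMatrix_toPEquiv]; rfl

theorem swapMatrix_mul_swapMatrix : swapMatrix n R * swapMatrix n R = 1 := by
  rw [swapMatrix_mul]
  ext p q
  simp [swapMatrix, one_apply, Prod.ext_iff, and_comm]

theorem swapMatrix_mul_kronecker (A B : Matrix n n R) :
    swapMatrix n R * (A ⊗ₖ B) = (B ⊗ₖ A) * swapMatrix n R := by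
  rw [swapMatrix_mul, mul_swapMatrix]
  ext p q
  exact mul_comm _ _

theorem trace_kronecker_mul_swapMatrix (A B : Matrix n n R) :
    trace ((A ⊗ₖ B) * swapMatrix n R) = trace (A * B) := by
  simp [mul_swapMatrix, trace, mul_apply, Fintype.sum_prod_type]

end Swap

section SymProj

variable [Fintype n] [Field R]

variable (n R) in
def symProj : Matrix (n × n) (n × n) R := (1 / 2 : R) • (1 + swapMatrix n R)

theorem isIdempotentElem_symProj : IsIdempotentElem (symProj n R) := by
  have h : (1 + swapMatrix n R) * (1 + swapMatrix n R) = (2 : R) • (1 + swapMatrix n R) := by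
    rw [mul_add, add_mul, add_mul, swapMatrix_mul_swapMatrix, two_smul]
    noncomm_ring
  rw [IsIdempotentElem, symProj, smul_mul_smul_comm, h, smul_smul]
  congr 1
  rcases eq_or_ne (2 : R) 0 with h2 | h2
  · simp [h2]
  · field_simp

theorem commute_symProj_kronecker_self (A : Matrix n n R) : Commute (symProj n R) (A ⊗ₖ A) := by
  simp only [Commute, SemiconjBy, symProj, Matrix.smul_mul, Matrix.mul_smul, add_mul, mul_add,
    one_mul, mul_one, swapMatrix_mul_kronecker]

theorem trace_kronecker_self_mul_symProj (A : Matrix n n R) :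
    trace ((A ⊗ₖ A) * symProj n R) = (1 / 2 : R) * (trace A ^ 2 + trace (A * A)) := by
  rw [symProj, Matrix.mul_smul, mul_add, mul_one, trace_smul, trace_add, trace_kronecker,
    trace_kronecker_mul_swapMatrix, smul_eq_mul, sq]

end SymProj

theorem prod_ofFn_kronecker_self [Fintype n] [CommSemiring R] {L : ℕ} (A : Fin L → Matrix n n R) :
    (List.ofFn fun i => A i ⊗ₖ A i).prod = (List.ofFn A).prod ⊗ₖ (List.ofFn A).prod := by
  induction L with
  | zero => simp
  | succ L ih => simp [List.ofFn_succ, ih, mul_kronecker_mul]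

section Triangular

variable [Fintype n] [CommRing R]

theorem blockTriangular_units_conj_prod_ofFn {α : Type*} [LinearOrder α] {b : n → α}
    (u : (Matrix n n R)ˣ) {L : ℕ} {A : Fin L → Matrix n n R}
    (hA : ∀ i, (u * A i * (↑u⁻¹ : Matrix n n R)).BlockTriangular b) :
    (u * (List.ofFn A).prod * (↑u⁻¹ : Matrix n n R)).BlockTriangular b := by
  let conj := MulSemiringAction.toRingHom _ (Matrix n n R) (ConjAct.toConjAct u)
  refine ((blockTriangularSubsemiring R b).comap conj).list_prod_mem ?_
  simpa [conj, ConjAct.units_smul_def] using hA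

theorem trace_mul_self_nonneg_of_units_conj_blockTriangular [LinearOrder R]
    [IsStrictOrderedRing R] [LinearOrder n] (u : (Matrix n n R)ˣ) {N : Matrix n n R}
    (hN : (u * N * (↑u⁻¹ : Matrix n n R)).BlockTriangular id) : 0 ≤ trace (N * N) := by
  have hsq : u * N * (↑u⁻¹ : Matrix n n R) * (u * N * (↑u⁻¹ : Matrix n n R)) =
      u * (N * N) * (↑u⁻¹ : Matrix n n R) := by
    simp only [mul_assoc, Units.inv_mul_cancel_left]
  simpa only [hsq, trace_units_conj] using hN.trace_mul_self_nonneg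

end Triangular

end Matrix

theorem trace_projected_nonneg_of_triangularizable (d L : ℕ)
    (Y : Fin L → Matrix (Fin d) (Fin d) ℝ)
    (hQ : ∃ Q : Matrix (Fin d) (Fin d) ℝ, IsUnit Q ∧
      ∀ i, (Q * Y i * Q⁻¹).BlockTriangular id) :
    let F : Matrix (Fin d × Fin d) (Fin d × Fin d) ℂ :=
      fun p q => if p.1 = q.2 ∧ p.2 = q.1 then 1 else 0
    let P : Matrix (Fin d × Fin d) (Fin d × Fin d) ℂ := (1 / 2 : ℂ) • (1 + F)
    let Yc : Fin L → Matrix (Fin d) (Fin d) ℂ := fun i => (Y i).map Complex.ofReal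
    0 ≤ (P * (List.ofFn fun i => (Yc i ⊗ₖ Yc i) * P).prod).trace := by
  intro F P Yc
  obtain ⟨_, ⟨u, rfl⟩, hT⟩ := hQ
  set N := (List.ofFn Y).prod
  have hN : 0 ≤ trace (N * N) := trace_mul_self_nonneg_of_units_conj_blockTriangular u
    (blockTriangular_units_conj_prod_ofFn u (by simpa [coe_units_inv] using hT))
  have hM : (List.ofFn Yc).prod = Complex.ofRealHom.mapMatrix N := by
    rw [map_list_prod, List.map_ofFn]; rfl
  have hP : P = symProj (Fin d) ℂ := rfl
  rw [hP, isIdempotentElem_symProj.mul_prod_ofFn_mul _ fun i => commute_symProj_kronecker_self _,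
    prod_ofFn_kronecker_self, trace_kronecker_self_mul_symProj, hM, ← map_mul]
  simp only [RingHom.mapMatrix_apply, ← AddMonoidHom.map_trace, Complex.ofRealHom_eq_coe]
  have hreal : (0 : ℂ) ≤ ((1 / 2 * (N.trace ^ 2 + (N * N).trace) : ℝ) : ℂ) :=
    Complex.zero_le_real.mpr (mul_nonneg one_half_pos.le (add_nonneg (sq_nonneg _) hN))
  simpa using hreal
end

section
/- Let (μᵢ)_{i≤r}, (ν_j)_{j≤s} and (μ'ₖ)_{k≤r'}, (ν'ₗ)_{l≤s'} be tuples of complex numbers with ∑ᵢ μᵢ^L · ∑ₗ ν'ₗ^L = ∑ⱼ νⱼ^L · ∑ₖ μ'ₖ^L for all L = 1,…,N where N ≥ max(r·s', s·r'). Then the same identity holds for all L ∈ ℕ, L ≥ 1. -/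
/-!
Both sides are power sums: `(∑ μᵢ^L)(∑ ν'ₗ^L)` is the `L`-th power sum of the `r s'` products
`μᵢ ν'ₗ`, and similarly on the right. After padding both multisets of products with zeros to size
`N`, Newton's identities turn equality of the first `N` power sums into equality of all elementary
symmetric functions, hence of the monic polynomials with these roots, hence of the multisets.
-/

open Finset Polynomial

namespace Multiset

variable {R : Type*}

def powerSum [Semiring R] (s : Multiset R) (k : ℕ) : R :=
  (s.map (· ^ k)).sum

theorem powerSum_add_replicate_zero [Semiring R] (s : Multiset R) (m : ℕ) {k : ℕ} (hk : k ≠ 0) :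
    (s + replicate m 0).powerSum k = s.powerSum k := by
  simp [powerSum, zero_pow hk]

theorem powerSum_map_univ [Semiring R] {ι : Type*} [Fintype ι] (f : ι → R) (k : ℕ) :
    (univ.val.map f).powerSum k = ∑ i, f i ^ k := by
  simp [powerSum, Finset.sum_map_val]

theorem powerSum_map_univ_mul [CommSemiring R] {ι κ : Type*} [Fintype ι] [Fintype κ]
    (f : ι → R) (g : κ → R) (k : ℕ) :
    (univ.val.map fun p : ι × κ => f p.1 * g p.2).powerSum k = (∑ i, f i ^ k) * ∑ j, g j ^ k := by
  simp [powerSum_map_univ, mul_pow, Fintype.sum_mul_sum, Fintype.sum_prod_type]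

theorem mul_esymm_eq_sum [CommRing R] (s : Multiset R) (k : ℕ) :
    k * s.esymm k = (-1) ^ (k + 1) *
      ∑ a ∈ HasAntidiagonal.antidiagonal k with a.1 < k,
        (-1) ^ a.1 * s.esymm a.1 * s.powerSum a.2 := by
  classical
  have hpowerSum (j : ℕ) : ∑ x : s, (x : R) ^ j = s.powerSum j := by
    rw [← powerSum_map_univ, map_univ_coe]
  simpa only [map_mul, map_pow, map_neg, map_one, map_natCast, map_sum, MvPolynomial.psum,
    MvPolynomial.aeval_X, MvPolynomial.aeval_esymm_eq_multiset_esymm, map_univ_coe, hpowerSum] using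
    congrArg (MvPolynomial.aeval (R := R) fun x : s => (x : R)) (MvPolynomial.mul_esymm_eq_sum s R k)

variable [CommRing R] [IsDomain R] [CharZero R]

theorem esymm_eq_of_powerSum_eq {s t : Multiset R} {n : ℕ}
    (h : ∀ k, 1 ≤ k → k ≤ n → s.powerSum k = t.powerSum k) {k : ℕ} (hk : k ≤ n) :
    s.esymm k = t.esymm k := by
  induction k using Nat.strong_induction_on with
  | _ k ih =>
    rcases Nat.eq_zero_or_pos k with rfl | hpos
    · simp [esymm]
    · refine mul_left_cancel₀ (Nat.cast_ne_zero.mpr hpos.ne') ?_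
      rw [mul_esymm_eq_sum, mul_esymm_eq_sum, Finset.sum_congr rfl fun a ha => ?_]
      obtain ⟨hsum, hlt⟩ : a.1 + a.2 = k ∧ a.1 < k := by simpa using ha
      rw [ih a.1 hlt (by omega), h a.2 (by omega) (by omega)]

theorem eq_of_powerSum_eq {s t : Multiset R} {n : ℕ} (hs : card s = n) (ht : card t = n)
    (h : ∀ k, 1 ≤ k → k ≤ n → s.powerSum k = t.powerSum k) : s = t := by
  have hprod : (s.map fun a => X + C a).prod = (t.map fun a => X + C a).prod := by
    rw [prod_X_add_C_eq_sum_esymm, prod_X_add_C_eq_sum_esymm, hs, ht]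
    refine Finset.sum_congr rfl fun k hk => ?_
    rw [esymm_eq_of_powerSum_eq h (Nat.lt_succ_iff.mp (mem_range.mp hk))]
  have hroots (u : Multiset R) : (u.map fun a => X + C a).prod.roots = u.map Neg.neg := by
    simpa [map_map, Function.comp_def, sub_neg_eq_add] using
      roots_multiset_prod_X_sub_C (u.map Neg.neg)
  have hneg := congrArg roots hprod
  rw [hroots, hroots] at hneg
  exact map_injective neg_injective hneg

theorem powerSum_eq_of_powerSum_eq_of_card_le {s t : Multiset R} {n : ℕ}
    (hs : card s ≤ n) (ht : card t ≤ n)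
    (h : ∀ k, 1 ≤ k → k ≤ n → s.powerSum k = t.powerSum k) :
    ∀ k, 1 ≤ k → s.powerSum k = t.powerSum k := by
  have hpad : s + replicate (n - card s) 0 = t + replicate (n - card t) 0 := by
    refine eq_of_powerSum_eq (n := n) (by simp; omega) (by simp; omega) fun k hk hkn => ?_
    rw [powerSum_add_replicate_zero _ _ (by omega), powerSum_add_replicate_zero _ _ (by omega)]
    exact h k hk hkn
  intro k hk
  rw [← powerSum_add_replicate_zero s (n - card s) (by omega), hpad,
    powerSum_add_replicate_zero _ _ (by omega)]

end Multiset

theorem cross_power_sum_identity_extends (r s r' s' N : ℕ)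
    (μ : Fin r → ℂ) (ν : Fin s → ℂ) (μ' : Fin r' → ℂ) (ν' : Fin s' → ℂ)
    (hN : max (r * s') (s * r') ≤ N)
    (h : ∀ L : ℕ, 1 ≤ L → L ≤ N →
      (∑ i, μ i ^ L) * (∑ l, ν' l ^ L) = (∑ j, ν j ^ L) * (∑ k, μ' k ^ L)) :
    ∀ L : ℕ, 1 ≤ L →
      (∑ i, μ i ^ L) * (∑ l, ν' l ^ L) = (∑ j, ν j ^ L) * (∑ k, μ' k ^ L) := by
  simp only [← Multiset.powerSum_map_univ_mul] at h ⊢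
  exact Multiset.powerSum_eq_of_powerSum_eq_of_card_le
    (by simpa using le_of_max_le_left hN) (by simpa using le_of_max_le_right hN) h
end
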